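/- Recovery of the (k+1)-factor bound via a rescaled DPP. Let A be an m×n real matrix and let k be an integer with 1 ≤ k < rank(A), so that OPT_k > 0. If S ~ DPP((1/OPT_k)·AᵀA), then E[|S|] ≤ k + 1 and E[Er_A(S)] ≤ (k+1)·OPT_k. -/

import Mathlib

open scoped BigOperators
open Matrix

namespace CSSP

variable {m n : ℕ}

/-- The `j`-th column of `A` as a vector in Euclidean space. -/
noncomputable def col {ι : Type*} (A : Matrix (Fin m) ι ℝ) (j : ι) :
    EuclideanSpace ℝ (Fin m) := WithLp.toLp 2 (fun i => A i j)

/-- The span of the columns of `A` indexed by `S`. -/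
noncomputable def colSpan {ι : Type*} (A : Matrix (Fin m) ι ℝ) (S : Finset ι) :
    Submodule ℝ (EuclideanSpace ℝ (Fin m)) :=
  Submodule.span ℝ {x | ∃ j ∈ S, x = col A j}

/-- `Er_A(S) = ‖A - P_S A‖_F²`, the squared Frobenius norm of the residual of projecting
the columns of `A` onto the span of the columns indexed by `S`. -/
noncomputable def Er {ι : Type*} [Fintype ι] (A : Matrix (Fin m) ι ℝ) (S : Finset ι) : ℝ :=
  ∑ j, ‖col A j - (Submodule.orthogonalProjectionOnto (colSpan A S) (col A j) : EuclideanSpace ℝ (Fin m))‖ ^ 2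

/-- Principal subdeterminant `det K_{S,S}`. -/
noncomputable def pdet (K : Matrix (Fin n) (Fin n) ℝ) (S : Finset (Fin n)) : ℝ :=
  (K.submatrix (fun i : {x : Fin n // x ∈ S} => (i : Fin n))
    (fun i : {x : Fin n // x ∈ S} => (i : Fin n))).det

/-- Expectation of `f` under the `k`-DPP with kernel `AᵀA`. -/
noncomputable def kDPPExp (A : Matrix (Fin m) (Fin n) ℝ) (k : ℕ)
    (f : Finset (Fin n) → ℝ) : ℝ :=
  (∑ S ∈ Finset.univ.filter (fun S : Finset (Fin n) => S.card = k), pdet (Aᵀ * A) S * f S) /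
    (∑ S ∈ Finset.univ.filter (fun S : Finset (Fin n) => S.card = k), pdet (Aᵀ * A) S)

/-- Expectation of `f` under the (random-size) DPP with kernel `(1/α)·AᵀA`. -/
noncomputable def dppExp (A : Matrix (Fin m) (Fin n) ℝ) (α : ℝ)
    (f : Finset (Fin n) → ℝ) : ℝ :=
  (∑ S : Finset (Fin n), α⁻¹ ^ S.card * pdet (Aᵀ * A) S * f S) /
    (1 + α⁻¹ • (Aᵀ * A)).det

/-- `lam` is the (multi-)set of eigenvalues of the symmetric matrix `K`. -/
def IsEigs (K : Matrix (Fin n) (Fin n) ℝ) (lam : Fin n → ℝ) : Prop :=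
  ∃ (hK : K.IsHermitian) (σ : Equiv.Perm (Fin n)), ∀ i, lam i = hK.eigenvalues (σ i)

/-- `OPT_k = Σ_{i > k} λ_i` (1-based indexing in the paper; `lam` here is 0-based). -/
noncomputable def opt (lam : Fin n → ℝ) (k : ℕ) : ℝ :=
  ∑ i ∈ Finset.univ.filter (fun i : Fin n => k ≤ (i : ℕ)), lam i

/-- Stable rank of order `s`: `sr_s = (Σ_{i > s} λ_i)/λ_{s+1}`. -/
noncomputable def srank (lam : Fin n → ℝ) (s : ℕ) (h : s < n) : ℝ :=
  (∑ i ∈ Finset.univ.filter (fun i : Fin n => s ≤ (i : ℕ)), lam i) / lam ⟨s, h⟩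

/-- Squared Frobenius norm. -/
noncomputable def frobSq {ι : Type*} [Fintype ι] (M : Matrix (Fin m) ι ℝ) : ℝ :=
  ∑ i, ∑ j, M i j ^ 2

/-- The squared Frobenius error of the best rank-`k` approximation of `A`. -/
noncomputable def optRank {ι : Type*} [Fintype ι] [DecidableEq ι]
    (A : Matrix (Fin m) ι ℝ) (k : ℕ) : ℝ :=
  sInf {x | ∃ B : Matrix (Fin m) ι ℝ, B.rank ≤ k ∧ x = frobSq (A - B)}

/-!
Put `x = α⁻¹`. Expanding `det (1 + x AᵀA)` multilinearly in its rows gives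
`Z(x) = ∑_S x^|S| det (A_SᵀA_S)`, while diagonalising gives `Z(x) = ∏ (1 + x λ_i)`; comparing
derivatives yields `E|S| = ∑ λ_i / (α + λ_i)`. For `α = OPT_k` the terms with `i < k` are at most
`1` each and the others add up to at most `∑_{i ≥ k} λ_i / OPT_k = 1`.
The base-times-height formula for Gram determinants,
`det (A_{S+j}ᵀA_{S+j}) = det (A_SᵀA_S) ‖a_j - P_S a_j‖²`, turns
`∑_S x^(|S|+1) det (A_SᵀA_S) Er_A(S)` into `∑_T |T| x^|T| det (A_TᵀA_T)`, i.e.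
`E[Er_A(S)] = α E|S|`.
-/

open Finset Submodule

theorem det_one_add_smul_eq_sum_pdet (M : Matrix (Fin n) (Fin n) ℝ) (x : ℝ) :
    (1 + x • M).det = ∑ S : Finset (Fin n), x ^ S.card * pdet M S := by
  let D : (Fin n → ℝ) [⋀^Fin n]→ₗ[ℝ] ℝ := detRowAlternating
  have hsplit :
      (1 + x • M).det = D ((fun i => x • M i) + (1 : Matrix (Fin n) (Fin n) ℝ).row) := by
    rw [add_comm]; rfl
  rw [hsplit, D.map_add_univ]
  refine sum_congr rfl fun S _ => ?_
  let R := S.piecewise M.row (1 : Matrix (Fin n) (Fin n) ℝ).row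
  have hrows : S.piecewise (fun i => x • M i) (1 : Matrix (Fin n) (Fin n) ℝ).row =
      S.piecewise (fun i => x • R i) R := by
    funext i
    by_cases hi : i ∈ S <;> simp [hi, R, Matrix.row, Finset.piecewise]
  rw [hrows]
  refine (D.toMultilinearMap.map_piecewise_smul _ R S).trans ?_
  rw [prod_const, smul_eq_mul]
  exact congrArg _ (det_piecewise_one_eq_submatrix_det M S)

theorem _root_.Matrix.IsHermitian.det_one_add_smul_eq_prod {ι : Type*} [Fintype ι]
    [DecidableEq ι] {M : Matrix ι ι ℝ} (hM : M.IsHermitian) (x : ℝ) :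
    (1 + x • M).det = ∏ i, (1 + x * hM.eigenvalues i) := by
  set U := hM.eigenvectorUnitary
  have hdiag :
      1 + x • M = U * diagonal (fun i => 1 + x * hM.eigenvalues i) * star (U : Matrix ι ι ℝ) := by
    have hD : 1 + x • diagonal (RCLike.ofReal ∘ hM.eigenvalues) =
        diagonal (fun i => 1 + x * hM.eigenvalues i) := by
      ext i j
      by_cases hij : i = j <;> simp [hij, one_apply]
    conv_lhs => rw [hM.spectral_theorem, ← map_one (Unitary.conjStarAlgAut ℝ _ U), ← map_smul,
      ← map_add, hD, Unitary.conjStarAlgAut_apply]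
  rw [hdiag, det_conj_of_mul_eq_one (Unitary.mul_star_self_of_mem U.2)
    (Unitary.star_mul_self_of_mem U.2), det_diagonal]

section Eigenvalues

variable {K : Matrix (Fin n) (Fin n) ℝ} {lam : Fin n → ℝ}

theorem IsEigs.det_one_add_smul (h : IsEigs K lam) (x : ℝ) :
    (1 + x • K).det = ∏ i, (1 + x * lam i) := by
  obtain ⟨hK, σ, hσ⟩ := h
  rw [hK.det_one_add_smul_eq_prod, ← Equiv.prod_comp σ]
  simp only [hσ]

theorem IsEigs.nonneg (h : IsEigs K lam) (hK : K.PosSemidef) (i : Fin n) : 0 ≤ lam i := by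
  obtain ⟨_, σ, hσ⟩ := h
  rw [hσ]
  exact hK.eigenvalues_nonneg _

theorem IsEigs.rank_eq_card (h : IsEigs K lam) : K.rank = Fintype.card {i // lam i ≠ 0} := by
  obtain ⟨hK, σ, hσ⟩ := h
  rw [hK.rank_eq_card_non_zero_eigs]
  exact Fintype.card_congr (σ.subtypeEquiv fun i => by rw [hσ]).symm

end Eigenvalues

section GeneratingFunction

variable {ι : Type*} [Fintype ι] [DecidableEq ι]

theorem sum_mul_card_eq_of_sum_pow_mul_eq_prod (c : Finset ι → ℝ) (μ : ι → ℝ)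
    (h : ∀ y : ℝ, ∑ S, y ^ S.card * c S = ∏ i, (1 + y * μ i)) :
    ∑ S, c S * S.card = ∑ i, μ i * ∏ j ∈ univ.erase i, (1 + μ j) := by
  have hlhs : HasDerivAt (fun y : ℝ => ∑ S, y ^ S.card * c S) (∑ S, c S * S.card) 1 := by
    simpa [mul_comm] using
      HasDerivAt.fun_sum (u := univ) fun S _ => (hasDerivAt_pow S.card (1 : ℝ)).mul_const (c S)
  have hrhs : HasDerivAt (fun y : ℝ => ∏ i, (1 + y * μ i))
      (∑ i, μ i * ∏ j ∈ univ.erase i, (1 + μ j)) 1 := by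
    simpa [mul_comm] using HasDerivAt.fun_finsetProd (u := univ) (f := fun i y => 1 + y * μ i)
      fun i _ => ((hasDerivAt_id (1 : ℝ)).mul_const (μ i)).const_add 1
  exact hlhs.unique (by simpa only [h] using hrhs)

theorem sum_mul_card_div_sum_eq (c : Finset ι → ℝ) (μ : ι → ℝ)
    (h : ∀ y : ℝ, ∑ S, y ^ S.card * c S = ∏ i, (1 + y * μ i)) (hμ : ∀ i, 1 + μ i ≠ 0) :
    (∑ S, c S * S.card) / ∑ S, c S = ∑ i, μ i / (1 + μ i) := by
  have hZ : ∑ S, c S = ∏ i, (1 + μ i) := by simpa using h 1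
  rw [sum_mul_card_eq_of_sum_pow_mul_eq_prod c μ h, hZ, sum_div]
  refine sum_congr rfl fun i _ => ?_
  rw [← mul_prod_erase univ _ (mem_univ i)]
  exact mul_div_mul_right _ _ (prod_ne_zero_iff.mpr fun j _ => hμ j)

theorem sum_sum_compl_insert {M : Type*} [AddCommMonoid M]
    (g : Finset ι → M) : ∑ S, ∑ j ∈ Sᶜ, g (insert j S) = ∑ T, T.card • g T := by
  calc ∑ S, ∑ j ∈ Sᶜ, g (insert j S) = ∑ j, ∑ S with j ∉ S, g (insert j S) :=
        sum_comm' fun S j => by simp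
    _ = ∑ j, ∑ T with j ∈ T, g T := by
        refine sum_congr rfl fun j _ =>
          sum_nbij' (insert j) (erase · j) ?_ ?_ ?_ ?_ fun S _ => rfl
        all_goals intro S hS; simp_all
    _ = ∑ T, ∑ j ∈ T, g T := (sum_comm' fun j T => by simp).symm
    _ = ∑ T, T.card • g T := by simp only [sum_const]

end GeneratingFunction

section Gram

variable {ι E : Type*} [Fintype ι] [DecidableEq ι] [NormedAddCommGroup E] [InnerProductSpace ℝ E]

theorem det_gram_sum_elim (v : ι → E) (w : E) [(span ℝ (Set.range v)).HasOrthogonalProjection] :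
    (gram ℝ (Sum.elim v fun _ : Unit => w)).det =
      (gram ℝ v).det * ‖w - (span ℝ (Set.range v)).starProjection w‖ ^ 2 := by
  set K := span ℝ (Set.range v)
  set u := w - K.starProjection w
  obtain ⟨c, hc⟩ := (mem_span_range_iff_exists_fun ℝ).mp (K.starProjection_apply_mem w)
  have hu : u ∈ Kᗮ := K.sub_starProjection_mem_orthogonal w
  have huv : ∀ i, inner ℝ u (v i) = 0 := fun i =>
    inner_left_of_mem_orthogonal (subset_span (Set.mem_range_self i)) hu
  have huw : inner ℝ u w = ‖u‖ ^ 2 := by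
    have hp : inner ℝ u (K.starProjection w) = 0 :=
      inner_left_of_mem_orthogonal (K.starProjection_apply_mem w) hu
    rw [← real_inner_self_eq_norm_sq, inner_sub_right u w, hp, sub_zero]
  set z := Sum.elim v fun _ : Unit => w
  set G := gram ℝ z
  -- subtracting `∑ c i • row i` from the last row replaces `w` by `u` in it
  set d : ι ⊕ Unit → ℝ := Sum.elim (fun i => -c i) fun _ => 1
  have hrow : ∑ k, d k • G k = fun b => inner ℝ u (z b) := by
    funext b
    simp only [u, ← hc, inner_sub_left, sum_inner, real_inner_smul_left, Finset.sum_apply,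
      Fintype.sum_sum_type, Pi.smul_apply, smul_eq_mul, d, G, gram_apply, z]
    simp [sub_eq_neg_add]
  have hblock : G.updateRow (Sum.inr ()) (∑ k, d k • G k) =
      fromBlocks (gram ℝ v) (of fun i _ => inner ℝ (v i) w) 0 (of fun _ _ => ‖u‖ ^ 2) := by
    ext (i | _) (j | _) <;> simp [G, z, gram_apply, hrow, huv, huw]
  calc G.det = d (Sum.inr ()) • G.det := by simp [d]
    _ = _ := by rw [← det_updateRow_sum, hblock, det_fromBlocks_zero₂₁,
      det_unique (of fun _ _ : Unit => ‖u‖ ^ 2)]; rfl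

end Gram

section Columns

variable (A : Matrix (Fin m) (Fin n) ℝ)

theorem posSemidef_transpose_mul_self : (Aᵀ * A).PosSemidef := by
  simpa using posSemidef_conjTranspose_mul_self A

theorem pdet_transpose_mul_self_eq_det_gram (S : Finset (Fin n)) :
    pdet (Aᵀ * A) S = (gram ℝ fun i : S => col A i).det := by
  unfold pdet
  congr 1
  ext i j
  simp [Matrix.mul_apply, col, gram_apply, PiLp.inner_apply, mul_comm]

theorem colSpan_eq_span_range (S : Finset (Fin n)) :
    colSpan A S = span ℝ (Set.range fun i : S => col A i) := by
  unfold colSpan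
  congr 1
  ext x
  simp [eq_comm]

theorem pdet_insert {S : Finset (Fin n)} {j : Fin n} (hj : j ∉ S) :
    pdet (Aᵀ * A) (insert j S) =
      pdet (Aᵀ * A) S * ‖col A j - (colSpan A S).starProjection (col A j)‖ ^ 2 := by
  let e : S ⊕ Unit ≃ (insert j S : Finset (Fin n)) :=
    ((subtypeInsertEquivOption hj).trans (Equiv.optionEquivSumPUnit _)).symm
  have he : (gram ℝ fun i : (insert j S : Finset (Fin n)) => col A i).submatrix e e =
      gram ℝ (Sum.elim (fun i : S => col A i) fun _ => col A j) := by
    ext (i | _) (k | _) <;> rfl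
  rw [pdet_transpose_mul_self_eq_det_gram, pdet_transpose_mul_self_eq_det_gram,
    ← det_submatrix_equiv_self e, he, det_gram_sum_elim, colSpan_eq_span_range]

theorem Er_mul_pdet (S : Finset (Fin n)) :
    Er A S * pdet (Aᵀ * A) S = ∑ j ∈ Sᶜ, pdet (Aᵀ * A) (insert j S) := by
  simp only [Er, coe_orthogonalProjectionOnto_apply, sum_mul]
  refine (sum_subset (subset_univ Sᶜ) fun j _ hj => ?_).symm.trans
    (sum_congr rfl fun j hj => ?_)
  · have hmem : col A j ∈ colSpan A S := subset_span ⟨j, by simpa using hj, rfl⟩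
    rw [starProjection_eq_self_iff.mpr hmem, sub_self, norm_zero]
    simp
  · rw [pdet_insert A (by simpa using hj), mul_comm]

theorem sum_pow_succ_mul_pdet_mul_Er (x : ℝ) :
    ∑ S, x ^ (S.card + 1) * pdet (Aᵀ * A) S * Er A S =
      ∑ S, x ^ S.card * pdet (Aᵀ * A) S * S.card := by
  calc _ = ∑ S, ∑ j ∈ Sᶜ, x ^ (insert j S).card * pdet (Aᵀ * A) (insert j S) := by
        refine sum_congr rfl fun S _ => ?_
        rw [mul_assoc, mul_comm (pdet _ _), Er_mul_pdet, mul_sum]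
        refine sum_congr rfl fun j hj => ?_
        rw [card_insert_of_notMem (by simpa using hj)]
    _ = _ := (sum_sum_compl_insert fun T => x ^ T.card * pdet (Aᵀ * A) T).trans
        (sum_congr rfl fun T _ => by rw [nsmul_eq_mul, mul_comm])

end Columns

section DPP

variable {A : Matrix (Fin m) (Fin n) ℝ} {lam : Fin n → ℝ}

theorem dppExp_card_eq (h : IsEigs (Aᵀ * A) lam) {α : ℝ} (hα : 0 < α) :
    dppExp A α (fun S => (S.card : ℝ)) = ∑ i, lam i / (α + lam i) := by
  have hnn := h.nonneg (posSemidef_transpose_mul_self A)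
  have hgen : ∀ y : ℝ, ∑ S, y ^ S.card * (α⁻¹ ^ S.card * pdet (Aᵀ * A) S) =
      ∏ i, (1 + y * (α⁻¹ * lam i)) := by
    intro y
    simp_rw [← mul_assoc, ← mul_pow, ← det_one_add_smul_eq_sum_pdet, h.det_one_add_smul]
  have hμ : ∀ i, 1 + α⁻¹ * lam i ≠ 0 := fun i => by have := hnn i; positivity
  rw [dppExp, det_one_add_smul_eq_sum_pdet, sum_mul_card_div_sum_eq _ _ hgen hμ]
  refine sum_congr rfl fun i _ => ?_
  have := hnn i
  field_simp

theorem dppExp_Er_eq {α : ℝ} (hα : α ≠ 0) :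
    dppExp A α (Er A) = α * dppExp A α (fun S => S.card) := by
  rw [dppExp, dppExp, ← sum_pow_succ_mul_pdet_mul_Er, mul_div_assoc', mul_sum]
  congr 1
  refine sum_congr rfl fun S _ => ?_
  rw [pow_succ]
  field_simp

end DPP

section Opt

variable {lam : Fin n → ℝ} {k : ℕ}

theorem card_filter_not_le_le : #{i : Fin n | ¬ k ≤ (i : ℕ)} ≤ k := by
  simpa only [not_le, Fin.card_filter_val_lt] using min_le_right n k

theorem opt_pos (hnn : ∀ i, 0 ≤ lam i) (hk : k < Fintype.card {i // lam i ≠ 0}) :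
    0 < opt lam k := by
  refine (sum_nonneg fun i _ => hnn i).lt_of_ne fun h0 => hk.not_ge ?_
  have hzero : ∀ i : Fin n, k ≤ (i : ℕ) → lam i = 0 := fun i hi =>
    (sum_eq_zero_iff_of_nonneg fun i _ => hnn i).mp h0.symm i (by simpa using hi)
  calc Fintype.card {i // lam i ≠ 0} = #{i : Fin n | lam i ≠ 0} := Fintype.card_subtype _
    _ ≤ #{i : Fin n | ¬ k ≤ (i : ℕ)} := card_le_card fun i hi => by
          simp only [mem_filter_univ] at hi ⊢
          exact mt (hzero i) hi
    _ ≤ k := card_filter_not_le_le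

theorem sum_div_opt_add_le (hnn : ∀ i, 0 ≤ lam i) (hpos : 0 < opt lam k) :
    ∑ i, lam i / (opt lam k + lam i) ≤ k + 1 := by
  rw [← sum_filter_not_add_sum_filter univ (fun i : Fin n => k ≤ (i : ℕ))]
  gcongr ?_ + ?_
  · calc _ ≤ ∑ i ∈ univ.filter (fun i : Fin n => ¬ k ≤ (i : ℕ)), (1 : ℝ) :=
          sum_le_sum fun i _ => div_le_one_of_le₀ (by linarith [hnn i]) (by linarith [hnn i])
      _ ≤ k := by
          rw [sum_const, nsmul_one]
          exact_mod_cast card_filter_not_le_le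
  · calc _ ≤ ∑ i ∈ univ.filter (fun i : Fin n => k ≤ (i : ℕ)), lam i / opt lam k :=
          sum_le_sum fun i _ => div_le_div_of_nonneg_left (hnn i) hpos (by linarith [hnn i])
      _ = 1 := by rw [← sum_div]; exact div_self hpos.ne'

end Opt

theorem kplus1_bound_general {m n : ℕ} (A : Matrix (Fin m) (Fin n) ℝ)
    (lam : Fin n → ℝ) (heig : IsEigs (Aᵀ * A) lam)
    (k : ℕ) (hk2 : k < A.rank) :
    0 < opt lam k ∧
      dppExp A (opt lam k) (fun S => (S.card : ℝ)) ≤ (k : ℝ) + 1 ∧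
      dppExp A (opt lam k) (Er A) ≤ ((k : ℝ) + 1) * opt lam k := by
  have hnn := heig.nonneg (posSemidef_transpose_mul_self A)
  have hopt : 0 < opt lam k :=
    opt_pos hnn (by rwa [← heig.rank_eq_card, rank_transpose_mul_self])
  have hsize : dppExp A (opt lam k) (fun S => (S.card : ℝ)) ≤ k + 1 := by
    rw [dppExp_card_eq heig hopt]
    exact sum_div_opt_add_le hnn hopt
  refine ⟨hopt, hsize, ?_⟩
  rw [dppExp_Er_eq hopt.ne', mul_comm]
  exact mul_le_mul_of_nonneg_right hsize hopt.le

/-- Recovery of the `(k+1)`-factor bound via a rescaled DPP: for `1 ≤ k < rank(A)` (so that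
`OPT_k > 0`), if `S ~ DPP((1/OPT_k)·AᵀA)` then `E[|S|] ≤ k+1` and
`E[Er_A(S)] ≤ (k+1)·OPT_k`. -/
theorem kplus1_bound {m n : ℕ} (A : Matrix (Fin m) (Fin n) ℝ)
    (lam : Fin n → ℝ) (hlam : Antitone lam) (heig : IsEigs (Aᵀ * A) lam)
    (k : ℕ) (hk1 : 1 ≤ k) (hk2 : k < A.rank) :
    0 < opt lam k ∧
      dppExp A (opt lam k) (fun S => (S.card : ℝ)) ≤ (k : ℝ) + 1 ∧
      dppExp A (opt lam k) (Er A) ≤ ((k : ℝ) + 1) * opt lam k :=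
  kplus1_bound_general A lam heig k hk2

end CSSP
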